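/- Suppose x1 ≥ x2 are real numbers and y^i_1 ≥ y^i_2 ≥ 0 for i = 1,...,m, with x1 - x2 ≥ sum_{i=1}^m (y^i_1 - y^i_2). Then x1 - x2 equals |min(y^1_1, x1) - min(y^1_2, x2)| + sum over j from 1 to m-1 of |min(y^{j+1}_1, (x1 - sum_{i=1}^j y^i_1)^+) - min(y^{j+1}_2, (x2 - sum_{i=1}^j y^i_2)^+)| + |(x1 - sum_{i=1}^m y^i_1)^+ - (x2 - sum_{i=1}^m y^i_2)^+|. -/

import Mathlib

lemma key_step (a c : ℝ) (hc : 0 ≤ c) :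
    min c (max a 0) + max (a - c) 0 = max a 0 := by
  rcases le_total a 0 with h | h <;> rcases le_total c a with h2 | h2 <;>
    simp [min_def, max_def] <;> split_ifs <;> linarith

lemma telescope (m : ℕ) (hm : 1 ≤ m) (x : ℝ) (y : ℕ → ℝ)
    (hy : ∀ i, 1 ≤ i → i ≤ m → 0 ≤ y i) :
    min (y 1) x
      + ∑ j ∈ Finset.Icc 1 (m - 1),
          min (y (j + 1)) (max (x - ∑ i ∈ Finset.Icc 1 j, y i) 0)
      + max (x - ∑ i ∈ Finset.Icc 1 m, y i) 0 = x := by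
  induction m, hm using Nat.le_induction with
  | base =>
      simp only [Nat.sub_self, Finset.Icc_self, Finset.sum_singleton,
        show (1:ℕ) - 1 = 0 from rfl, Finset.Icc_eq_empty_of_lt (by norm_num : (1:ℕ) > 0),
        Finset.sum_empty, add_zero]
      rcases le_total (y 1) x with h | h <;> simp [min_def, max_def] <;>
        split_ifs <;> linarith
  | succ n hn ih =>
      obtain ⟨k, rfl⟩ : ∃ k, n = k + 1 := ⟨n - 1, by omega⟩
      have hy' : ∀ i, 1 ≤ i → i ≤ k + 1 → 0 ≤ y i := fun i h1 h2 => hy i h1 (by omega)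
      have e1 : k + 1 + 1 - 1 = k + 1 := by omega
      have e2 : k + 1 - 1 = k := by omega
      rw [e1, Finset.sum_Icc_succ_top (by omega : 1 ≤ k + 1),
          Finset.sum_Icc_succ_top (by omega : (1:ℕ) ≤ k + 1 + 1), sub_add_eq_sub_sub]
      have hk : 0 ≤ y (k + 1 + 1) := hy (k + 1 + 1) (by omega) (by omega)
      have := key_step (x - ∑ i ∈ Finset.Icc 1 (k + 1), y i) (y (k + 1 + 1)) hk
      rw [e2] at ih
      have ih' := ih hy'
      linarith [this, ih']

theorem lemma_A6 (m : ℕ) (hm : 1 ≤ m) (x1 x2 : ℝ) (hx : x1 ≥ x2)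
    (y1 y2 : ℕ → ℝ)
    (hy1 : ∀ i, 1 ≤ i → i ≤ m → y1 i ≥ y2 i)
    (hy2 : ∀ i, 1 ≤ i → i ≤ m → 0 ≤ y2 i)
    (hsum : x1 - x2 ≥ ∑ i ∈ Finset.Icc 1 m, (y1 i - y2 i)) :
    x1 - x2 = |min (y1 1) x1 - min (y2 1) x2|
      + ∑ j ∈ Finset.Icc 1 (m - 1),
          |min (y1 (j + 1)) (max (x1 - ∑ i ∈ Finset.Icc 1 j, y1 i) 0)
            - min (y2 (j + 1)) (max (x2 - ∑ i ∈ Finset.Icc 1 j, y2 i) 0)|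
      + |max (x1 - ∑ i ∈ Finset.Icc 1 m, y1 i) 0
          - max (x2 - ∑ i ∈ Finset.Icc 1 m, y2 i) 0| := by
  -- monotonicity: partial sums comparison
  have hdiff : ∀ j, j ≤ m →
      x2 - ∑ i ∈ Finset.Icc 1 j, y2 i ≤ x1 - ∑ i ∈ Finset.Icc 1 j, y1 i := by
    intro j hj
    have hsub : Finset.Icc 1 j ⊆ Finset.Icc 1 m := Finset.Icc_subset_Icc_right hj
    have h1 : ∑ i ∈ Finset.Icc 1 j, (y1 i - y2 i) ≤ ∑ i ∈ Finset.Icc 1 m, (y1 i - y2 i) := by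
      apply Finset.sum_le_sum_of_subset_of_nonneg hsub
      intro i hi _
      simp only [Finset.mem_Icc] at hi
      have := hy1 i hi.1 hi.2
      linarith
    have h2 : ∑ i ∈ Finset.Icc 1 j, (y1 i - y2 i)
        = ∑ i ∈ Finset.Icc 1 j, y1 i - ∑ i ∈ Finset.Icc 1 j, y2 i :=
      Finset.sum_sub_distrib y1 y2
    linarith
  have habs1 : |min (y1 1) x1 - min (y2 1) x2| = min (y1 1) x1 - min (y2 1) x2 := by
    apply abs_of_nonneg
    have := min_le_min (hy1 1 le_rfl hm) hx
    linarith
  have habs3 : |max (x1 - ∑ i ∈ Finset.Icc 1 m, y1 i) 0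
      - max (x2 - ∑ i ∈ Finset.Icc 1 m, y2 i) 0|
      = max (x1 - ∑ i ∈ Finset.Icc 1 m, y1 i) 0
      - max (x2 - ∑ i ∈ Finset.Icc 1 m, y2 i) 0 := by
    apply abs_of_nonneg
    have := max_le_max (hdiff m le_rfl) (le_refl (0:ℝ))
    linarith
  have habs2 : ∀ j ∈ Finset.Icc 1 (m - 1),
      |min (y1 (j + 1)) (max (x1 - ∑ i ∈ Finset.Icc 1 j, y1 i) 0)
        - min (y2 (j + 1)) (max (x2 - ∑ i ∈ Finset.Icc 1 j, y2 i) 0)|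
      = min (y1 (j + 1)) (max (x1 - ∑ i ∈ Finset.Icc 1 j, y1 i) 0)
        - min (y2 (j + 1)) (max (x2 - ∑ i ∈ Finset.Icc 1 j, y2 i) 0) := by
    intro j hj
    simp only [Finset.mem_Icc] at hj
    apply abs_of_nonneg
    have h1 := hy1 (j + 1) (by omega) (by omega)
    have h2 := max_le_max (hdiff j (by omega)) (le_refl (0:ℝ))
    have := min_le_min h1 h2
    linarith
  rw [habs1, habs3, Finset.sum_congr rfl habs2, Finset.sum_sub_distrib]
  have t1 := telescope m hm x1 y1 (fun i h1 h2 => le_trans (hy2 i h1 h2) (hy1 i h1 h2))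
  have t2 := telescope m hm x2 y2 hy2
  linarith
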